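/- There are no integers n and a such that n² + n + 1 = 37·a². Equivalently, 74 is not of the form 2(n² + n + 1)/a² for any integers n, a. -/
import Mathlib

lemma key : ∀ y : ℕ, ∀ x : ℤ, x ^ 2 + 3 ≠ 37 * (y : ℤ) ^ 2 := by
  intro y
  induction y using Nat.strong_induction_on with
  | _ y ih =>
    intro x h
    set a : ℤ := |x| with ha
    have ha0 : 0 ≤ a := abs_nonneg x
    have ha2 : a ^ 2 + 3 = 37 * (y : ℤ) ^ 2 := by rw [ha, sq_abs]; exact h
    rcases le_or_gt y 1 with hy | hy
    · interval_cases y <;> norm_num at ha2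
      · nlinarith
      · have h1 : a ≤ 6 := by nlinarith
        interval_cases a <;> omega
    · have hy2 : (2 : ℤ) ≤ (y : ℤ) := by exact_mod_cast hy
      -- descent
      have h12 : 12 * a < 73 * (y : ℤ) := by nlinarith
      have h6 : 6 * (y : ℤ) < a := by nlinarith
      set y' : ℤ := 73 * (y : ℤ) - 12 * a with hy'
      have hy'pos : 0 < y' := by omega
      have hy'lt : y' < (y : ℤ) := by omega
      set x' : ℤ := 444 * (y : ℤ) - 73 * a with hx'
      have hid : x' ^ 2 + 3 = 37 * y' ^ 2 := by rw [hx', hy']; ring_nf; nlinarith [ha2]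
      have hnat : (y'.natAbs : ℤ) = y' := Int.natAbs_of_nonneg hy'pos.le
      have hlt : y'.natAbs < y := by
        have := hy'lt
        omega
      exact ih y'.natAbs hlt x' (by rw [hnat]; exact hid)

theorem no_int_solutions_37 : ¬ ∃ (n a : ℤ), n ^ 2 + n + 1 = 37 * a ^ 2 := by
  rintro ⟨n, a, h⟩
  have h2 : (2 * n + 1) ^ 2 + 3 = 37 * (2 * a) ^ 2 := by ring_nf; nlinarith [h]
  have hcast : (((2 * a).natAbs : ℤ)) ^ 2 = (2 * a) ^ 2 := by
    rw [Int.natCast_natAbs, sq_abs]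
  exact key (2 * a).natAbs (2 * n + 1) (by rw [hcast]; exact h2)
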